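/- arXiv:2106.02600 — 2 statements merged into one kernel-verified Lean document; each statement's English description precedes it below -/
import Mathlib

section
/- Let g : ℝ → ℝ be differentiable with g'(x) ≥ m_g > 0 for all x, and let w_1, …, w_T be vectors in ℝ^N. Define the vector field F(θ) = (1/T) ∑_{t=1}^T w_t (g(w_tᵀθ) − c_t) for arbitrary constants c_t. Then F is monotone with modulus m_g·λ_1, where λ_1 is the smallest eigenvalue of the matrix W = (1/T) ∑_{t=1}^T w_t w_tᵀ; that is, (F(θ) − F(θ'))ᵀ(θ − θ') ≥ m_g·λ_1·‖θ − θ'‖₂² for all θ, θ' ∈ ℝ^N. -/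
open scoped RealInnerProductSpace BigOperators

/-
Proof idea: by the mean value theorem g is strongly monotone with modulus m_g, i.e.
m_g (a - b)² ≤ (g a - g b)(a - b). Pairing F θ - F θ' with v = θ - θ' gives the average over t of
(g ⟪w_t, θ⟫ - g ⟪w_t, θ'⟫) ⟪w_t, v⟫, and each term is at least m_g ⟪w_t, v⟫² because
⟪w_t, v⟫ = ⟪w_t, θ⟫ - ⟪w_t, θ'⟫. The average of ⟪w_t, v⟫² is vᵀ W v ≥ λ_1 ‖v‖².
-/

theorem mul_sq_le_sub_mul_sub_of_le_deriv {f : ℝ → ℝ} {m : ℝ} (hf : Differentiable ℝ f)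
    (hm : ∀ x, m ≤ deriv f x) (a b : ℝ) : m * (a - b) ^ 2 ≤ (f a - f b) * (a - b) := by
  wlog hba : b ≤ a generalizing a b
  · have := this b a (le_of_not_ge hba)
    linarith
  have hslope : m * (a - b) ≤ f a - f b := mul_sub_le_image_sub_of_le_deriv hf hm hba
  nlinarith [sub_nonneg.mpr hba]

section SingleIndexField

variable {E ι : Type*} [NormedAddCommGroup E] [InnerProductSpace ℝ E] [Fintype ι]

theorem inner_sub_sub_of_eq_smul_sum {g : ℝ → ℝ} {s : ℝ} {w : ι → E} {c : ι → ℝ} {F : E → E}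
    (hF : ∀ θ, F θ = s • ∑ t, (g ⟪w t, θ⟫ - c t) • w t) (θ θ' : E) :
    ⟪F θ - F θ', θ - θ'⟫ = s * ∑ t, (g ⟪w t, θ⟫ - g ⟪w t, θ'⟫) * ⟪w t, θ - θ'⟫ := by
  simp only [hF, inner_sub_left, inner_smul_left, sum_inner, RCLike.conj_to_real, ← mul_sub,
    ← Finset.sum_sub_distrib, ← sub_mul]
  congr 1
  exact Finset.sum_congr rfl fun t _ => by ring

theorem mul_sum_sq_inner_le_inner_sub_sub {g : ℝ → ℝ} {m s : ℝ} (hg : Differentiable ℝ g)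
    (hderiv : ∀ x, m ≤ deriv g x) (hs : 0 ≤ s) {w : ι → E} {c : ι → ℝ} {F : E → E}
    (hF : ∀ θ, F θ = s • ∑ t, (g ⟪w t, θ⟫ - c t) • w t) (θ θ' : E) :
    m * (s * ∑ t, ⟪w t, θ - θ'⟫ ^ 2) ≤ ⟪F θ - F θ', θ - θ'⟫ := by
  rw [inner_sub_sub_of_eq_smul_sum hF, Finset.mul_sum, Finset.mul_sum, Finset.mul_sum]
  refine Finset.sum_le_sum fun t _ => ?_
  have hterm := mul_sq_le_sub_mul_sub_of_le_deriv hg hderiv ⟪w t, θ⟫ ⟪w t, θ'⟫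
  rw [← inner_sub_right] at hterm
  nlinarith

end SingleIndexField

/-- Monotonicity modulus of the empirical GLM vector field (Lemma "Property I"). -/
theorem stmt_0 {N T : ℕ} (g : ℝ → ℝ) (m_g lam1 : ℝ)
    (hg : Differentiable ℝ g) (hm : 0 < m_g) (hderiv : ∀ x, m_g ≤ deriv g x)
    (w : Fin T → EuclideanSpace ℝ (Fin N)) (c : Fin T → ℝ)
    (F : EuclideanSpace ℝ (Fin N) → EuclideanSpace ℝ (Fin N))
    (hF : ∀ θ, F θ = (T : ℝ)⁻¹ • ∑ t, (g ⟪w t, θ⟫ - c t) • w t)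
    (hlam : ∀ v : EuclideanSpace ℝ (Fin N),
      lam1 * ‖v‖ ^ 2 ≤ (T : ℝ)⁻¹ * ∑ t, ⟪w t, v⟫ ^ 2) :
    ∀ θ θ' : EuclideanSpace ℝ (Fin N),
      m_g * lam1 * ‖θ - θ'‖ ^ 2 ≤ ⟪F θ - F θ', θ - θ'⟫ := by
  intro θ θ'
  calc m_g * lam1 * ‖θ - θ'‖ ^ 2 = m_g * (lam1 * ‖θ - θ'‖ ^ 2) := mul_assoc _ _ _
    _ ≤ m_g * ((T : ℝ)⁻¹ * ∑ t, ⟪w t, θ - θ'⟫ ^ 2) :=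
      mul_le_mul_of_nonneg_left (hlam _) hm.le
    _ ≤ ⟪F θ - F θ', θ - θ'⟫ :=
      mul_sum_sq_inner_le_inner_sub_sub hg hderiv (by positivity) hF θ θ'
end

section
/- Let g : ℝ → ℝ satisfy (g(a) − g(b))(a − b) ≥ m_g (a − b)² for all a, b ∈ ℝ (e.g., g differentiable with g' ≥ m_g > 0). Let w_1, …, w_T ∈ ℝ^N and let λ_1 > 0 be the smallest eigenvalue of W = (1/T)∑_t w_t w_tᵀ. Suppose θ̂ and θ* are two points in ℝ^N, and define Δ = F(θ̂) − F(θ*) where F(θ) = (1/T)∑_t w_t g(w_tᵀθ). Then ‖θ̂ − θ*‖₂ ≤ ‖Δ‖₂ / (m_g λ_1). -/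
/-!
Strong monotonicity of `g` makes the empirical field `F` strongly monotone: pairing
`F θ̂ - F θ*` with `v = θ̂ - θ*` gives `(1/T) ∑ₜ (g ⟪wₜ, θ̂⟫ - g ⟪wₜ, θ*⟫) ⟪wₜ, v⟫`, each term
is at least `m_g ⟪wₜ, v⟫²`, and the eigenvalue bound turns `(1/T) ∑ₜ ⟪wₜ, v⟫²` into
`λ₁ ‖v‖²`. Cauchy–Schwarz on `⟪Δ, v⟫` then bounds `‖v‖`.
-/

open scoped RealInnerProductSpace BigOperators

section StronglyMonotone

variable {E : Type*} [NormedAddCommGroup E] [InnerProductSpace ℝ E]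

theorem norm_le_norm_div_of_mul_sq_le_inner {c : ℝ} (hc : 0 < c) {u v : E}
    (h : c * ‖v‖ ^ 2 ≤ ⟪u, v⟫) : ‖v‖ ≤ ‖u‖ / c := by
  rw [le_div_iff₀ hc]
  have hcs : c * ‖v‖ ^ 2 ≤ ‖u‖ * ‖v‖ := h.trans (real_inner_le_norm u v)
  rcases (norm_nonneg v).eq_or_lt with hv | hv
  · rw [← hv, zero_mul]
    exact norm_nonneg u
  · nlinarith

variable {ι : Type*} [Fintype ι] (g : ℝ → ℝ) (w : ι → E) (x y : E)

theorem inner_sum_smul_sub_sum_smul :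
    ⟪∑ t, g ⟪w t, x⟫ • w t - ∑ t, g ⟪w t, y⟫ • w t, x - y⟫ =
      ∑ t, (g ⟪w t, x⟫ - g ⟪w t, y⟫) * ⟪w t, x - y⟫ := by
  simp only [← Finset.sum_sub_distrib, ← sub_smul, sum_inner, real_inner_smul_left]

theorem mul_sum_sq_inner_le_inner_sum_smul_sub {m : ℝ}
    (hg : ∀ a b : ℝ, m * (a - b) ^ 2 ≤ (g a - g b) * (a - b)) :
    m * ∑ t, ⟪w t, x - y⟫ ^ 2 ≤
      ⟪∑ t, g ⟪w t, x⟫ • w t - ∑ t, g ⟪w t, y⟫ • w t, x - y⟫ := by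
  rw [inner_sum_smul_sub_sum_smul, Finset.mul_sum]
  refine Finset.sum_le_sum fun t _ => ?_
  simpa only [inner_sub_right] using hg ⟪w t, x⟫ ⟪w t, y⟫

end StronglyMonotone

/-- Deterministic core of Theorem 1: strong monotonicity gives the error bound. -/
theorem stmt_1 {N T : ℕ} (g : ℝ → ℝ) (m_g lam1 : ℝ)
    (hg : ∀ a b : ℝ, m_g * (a - b) ^ 2 ≤ (g a - g b) * (a - b))
    (hm : 0 < m_g) (hlampos : 0 < lam1)
    (w : Fin T → EuclideanSpace ℝ (Fin N))
    (hlam : ∀ v : EuclideanSpace ℝ (Fin N),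
      lam1 * ‖v‖ ^ 2 ≤ (T : ℝ)⁻¹ * ∑ t, ⟪w t, v⟫ ^ 2)
    (F : EuclideanSpace ℝ (Fin N) → EuclideanSpace ℝ (Fin N))
    (hF : ∀ θ, F θ = (T : ℝ)⁻¹ • ∑ t, g ⟪w t, θ⟫ • w t)
    (θhat θstar Δ : EuclideanSpace ℝ (Fin N))
    (hΔ : Δ = F θhat - F θstar) :
    ‖θhat - θstar‖ ≤ ‖Δ‖ / (m_g * lam1) := by
  rw [hΔ, hF, hF, ← smul_sub]
  refine norm_le_norm_div_of_mul_sq_le_inner (mul_pos hm hlampos) ?_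
  calc m_g * lam1 * ‖θhat - θstar‖ ^ 2
      ≤ m_g * ((T : ℝ)⁻¹ * ∑ t, ⟪w t, θhat - θstar⟫ ^ 2) := by
        rw [mul_assoc]
        exact mul_le_mul_of_nonneg_left (hlam _) hm.le
    _ = (T : ℝ)⁻¹ * (m_g * ∑ t, ⟪w t, θhat - θstar⟫ ^ 2) := by ring
    _ ≤ (T : ℝ)⁻¹ * ⟪∑ t, g ⟪w t, θhat⟫ • w t - ∑ t, g ⟪w t, θstar⟫ • w t,
          θhat - θstar⟫ := by
        gcongr
        exact mul_sum_sq_inner_le_inner_sum_smul_sub g w θhat θstar hg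
    _ = _ := (real_inner_smul_left _ _ _).symm
end
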